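/- Let G = (V,E) be a finite bi-directed graph, let n : {0,1}^V → ℕ be counts indexed by cells, written n_A = n((0_A, 1_{V∖A})) for A ⊆ V, and consider the log-likelihood ℓ(q) = Σ_{A ⊆ V} n_A · log p_A^V(q) as a function of the variables (q_C : ∅ ≠ C ⊆ V connected in G), defined on the open set where p_A^V(q) > 0 for all A ⊆ V. Then for every nonempty connected set C, the partial derivative of ℓ with respect to q_C equals ∂ℓ/∂q_C = Σ_{A : spo(C) ∩ (A∖C) = ∅} (−1)^{|C∖A|} · (n_A / p_A^V(q)) · p_{A∖C}^{V∖spo(C)}(q), the sum being over all A ⊆ V with spo(C) ∩ (A∖C) = ∅. -/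

import Mathlib

open Finset

namespace BMMI

variable {V : Type*} [Fintype V] [DecidableEq V]

/-- `Pr p A a` is the probability of the event `X_A = a|_A` under `p`. -/
def Pr (p : (V → Bool) → ℝ) (A : Finset V) (a : V → Bool) : ℝ :=
  ∑ i ∈ Finset.univ.filter (fun i : V → Bool => ∀ v ∈ A, i v = a v), p i

/-- `p` is a binary distribution on `V`. -/
def IsDist (p : (V → Bool) → ℝ) : Prop :=
  (∀ i, 0 ≤ p i) ∧ ∑ i : V → Bool, p i = 1

/-- `Pr2 p S T a b` is the probability of the joint event `X_S = a|_S, X_T = b|_T`. -/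
def Pr2 (p : (V → Bool) → ℝ) (S T : Finset V) (a b : V → Bool) : ℝ :=
  ∑ i ∈ Finset.univ.filter
      (fun i : V → Bool => (∀ v ∈ S, i v = a v) ∧ (∀ v ∈ T, i v = b v)), p i

/-- `X_S` and `X_T` are independent under `p`. -/
def Indep (p : (V → Bool) → ℝ) (S T : Finset V) : Prop :=
  ∀ a b : V → Bool, Pr2 p S T a b = Pr p S a * Pr p T b

/-- `spo G A` consists of `A` together with all vertices adjacent to a vertex of `A`. -/
def spo (G : SimpleGraph V) [DecidableRel G.Adj] (A : Finset V) : Finset V :=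
  Finset.univ.filter (fun w => w ∈ A ∨ ∃ v ∈ A, G.Adj v w)

/-- `C` is connected in `G`: every pair of vertices of `C` is joined by a walk
all of whose vertices lie in `C`. -/
def Conn (G : SimpleGraph V) (C : Finset V) : Prop :=
  ∀ v ∈ C, ∀ w ∈ C, ∃ W : G.Walk v w, ∀ x ∈ W.support, x ∈ C

/-- The connected set Markov property for the bi-directed graph `G`. -/
def CSMP (G : SimpleGraph V) [DecidableRel G.Adj] (p : (V → Bool) → ℝ) : Prop :=
  ∀ C : Finset V, C.Nonempty → Conn G C → Indep p C (Finset.univ \ spo G C)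

/-- `C` is an inclusion-maximal connected subset of `D` (a connected component of the
induced subgraph on `D`). -/
def IsMaxConnComp (G : SimpleGraph V) (D C : Finset V) : Prop :=
  C ⊆ D ∧ C.Nonempty ∧ Conn G C ∧
    ∀ C' : Finset V, C ⊆ C' → C' ⊆ D → Conn G C' → C' = C

/-- The Möbius parameter `q_A(p) = P(X_A = 0)`. -/
def qM (p : (V → Bool) → ℝ) (A : Finset V) : ℝ := Pr p A (fun _ => false)

open Classical in
/-- `[B]_G`: the finset of inclusion-maximal connected subsets of `B`. -/
noncomputable def maxConnComps (G : SimpleGraph V) (B : Finset V) :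
    Finset (Finset V) :=
  B.powerset.filter (fun C => IsMaxConnComp G B C)

/-- The polynomial `p_A^W(q) = Σ_{A ⊆ B ⊆ W} (−1)^{|B∖A|} ∏_{C ∈ [B]_G} q_C`
in the variables `q`. -/
noncomputable def pPoly (G : SimpleGraph V) (A W : Finset V)
    (q : Finset V → ℝ) : ℝ :=
  ∑ B ∈ Finset.univ.filter (fun B : Finset V => A ⊆ B ∧ B ⊆ W),
    (-1 : ℝ) ^ (B \ A).card * ∏ C ∈ maxConnComps G B, q C

end BMMI

/-!
Only the monomials `∏_{D ∈ [B]} q_D` with `C ∈ [B]` involve `q_C`, and linearly, with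
coefficient `∏_{D ∈ [B] \ {C}} q_D = ∏_{D ∈ [B \ C]} q_D`. A nonempty connected `C` is a
component of `B` exactly when `C ⊆ B` and `B` meets `spo C` only inside `C`; so `B ↦ B \ C`
identifies the sets `B ⊇ A` with `C ∈ [B]` with the sets between `A \ C` and `V \ spo C`, and
the sign splits as `(-1)^{|C \ A|} (-1)^{|(B \ C) \ (A \ C)|}`. Hence
`∂p_A^V/∂q_C = (-1)^{|C \ A|} p_{A \ C}^{V \ spo C}`, which vanishes unless
`spo C ∩ (A \ C) = ∅`, and the chain rule for `log` gives the formula.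
-/

namespace BMMI

section

variable {V : Type*} {G : SimpleGraph V}

lemma mem_maxConnComps {B C : Finset V} : C ∈ maxConnComps G B ↔ IsMaxConnComp G B C := by
  simp only [maxConnComps, mem_filter, mem_powerset]
  exact ⟨And.right, fun h => ⟨h.1, h⟩⟩

lemma conn_of_forall_walk_to {S : Finset V} (x : V)
    (h : ∀ a ∈ S, ∃ W : G.Walk a x, ∀ y ∈ W.support, y ∈ S) : Conn G S := by
  intro a ha b hb
  obtain ⟨Wa, hWa⟩ := h a ha
  obtain ⟨Wb, hWb⟩ := h b hb
  refine ⟨Wa.append Wb.reverse, fun y hy => ?_⟩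
  rw [SimpleGraph.Walk.mem_support_append_iff, SimpleGraph.Walk.support_reverse,
    List.mem_reverse] at hy
  exact hy.elim (hWa y) (hWb y)

lemma hasDerivAt_prod_update {𝕜 ι : Type*} [NontriviallyNormedField 𝕜] [DecidableEq ι]
    (s : Finset ι) (f : ι → 𝕜) (i : ι) (x : 𝕜) :
    HasDerivAt (fun t => ∏ j ∈ s, Function.update f i t j)
      (if i ∈ s then ∏ j ∈ s.erase i, f j else 0) x := by
  split_ifs with h
  · simp_rw [prod_update_of_mem h, sdiff_singleton_eq_erase]
    exact hasDerivAt_mul_const _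
  · simp_rw [prod_update_of_notMem h]
    exact hasDerivAt_const _ _

variable [DecidableEq V]

lemma Conn.insert_of_adj {C : Finset V} (hconn : Conn G C) {v x : V} (hv : v ∈ C)
    (hadj : G.Adj v x) : Conn G (insert x C) := by
  refine conn_of_forall_walk_to v fun a ha => ?_
  rcases mem_insert.1 ha with rfl | haC
  · exact ⟨.cons hadj.symm .nil, by simp [hv]⟩
  · obtain ⟨W, hW⟩ := hconn a haC v hv
    exact ⟨W, fun y hy => mem_insert_of_mem (hW y hy)⟩

lemma Conn.union {C D : Finset V} (hC : Conn G C) (hD : Conn G D) {x : V} (hxC : x ∈ C)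
    (hxD : x ∈ D) : Conn G (C ∪ D) := by
  refine conn_of_forall_walk_to x fun a ha => ?_
  rcases mem_union.1 ha with haC | haD
  · obtain ⟨W, hW⟩ := hC a haC x hxC
    exact ⟨W, fun y hy => mem_union_left _ (hW y hy)⟩
  · obtain ⟨W, hW⟩ := hD a haD x hxD
    exact ⟨W, fun y hy => mem_union_right _ (hW y hy)⟩

lemma IsMaxConnComp.subset_of_conn {B C D : Finset V} (hC : IsMaxConnComp G B C)
    (hD : Conn G D) (hDB : D ⊆ B) {x : V} (hxC : x ∈ C) (hxD : x ∈ D) : D ⊆ C := by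
  rw [← hC.2.2.2 (C ∪ D) subset_union_left (union_subset hC.1 hDB) (hC.2.2.1.union hD hxC hxD)]
  exact subset_union_right

lemma erase_maxConnComps {B C : Finset V} (h : C ∈ maxConnComps G B) :
    (maxConnComps G B).erase C = maxConnComps G (B \ C) := by
  rw [mem_maxConnComps] at h
  ext D
  simp only [mem_erase, mem_maxConnComps]
  constructor
  · rintro ⟨hDC, hD⟩
    have hdisj : ∀ x ∈ D, x ∉ C := fun x hxD hxC =>
      hDC (hD.2.2.2 C (h.subset_of_conn hD.2.2.1 hD.1 hxC hxD) h.1 h.2.2.1).symm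
    exact ⟨fun x hx => mem_sdiff.2 ⟨hD.1 hx, hdisj x hx⟩, hD.2.1, hD.2.2.1,
      fun C' hDC' hC'B => hD.2.2.2 C' hDC' (hC'B.trans sdiff_subset)⟩
  · intro hD
    obtain ⟨x, hxD⟩ := hD.2.1
    have hxC : x ∉ C := (mem_sdiff.1 (hD.1 hxD)).2
    refine ⟨fun hDC => hxC (hDC ▸ hxD), hD.1.trans sdiff_subset, hD.2.1, hD.2.2.1,
      fun C' hDC' hC'B hconn' => hD.2.2.2 C' hDC' (fun y hy => ?_) hconn'⟩
    exact mem_sdiff.2 ⟨hC'B hy, fun hyC => hxC (h.subset_of_conn hconn' hC'B hyC hy (hDC' hxD))⟩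

variable [Fintype V]

lemma pPoly_eq_zero_of_not_subset {A W : Finset V} (h : ¬A ⊆ W) (q : Finset V → ℝ) :
    pPoly G A W q = 0 := by
  refine sum_eq_zero fun B hB => absurd ?_ h
  obtain ⟨hAB, hBW⟩ := (mem_filter.1 hB).2
  exact hAB.trans hBW

variable [DecidableRel G.Adj]

@[simp]
lemma mem_spo {A : Finset V} {x : V} : x ∈ spo G A ↔ x ∈ A ∨ ∃ v ∈ A, G.Adj v x := by
  simp [spo]

lemma self_subset_spo {A : Finset V} : A ⊆ spo G A := fun _ hx => mem_spo.2 (Or.inl hx)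

lemma mem_of_walk_of_inter_spo_subset {B C : Finset V} (hB : B ∩ spo G C ⊆ C) {v w : V}
    (W : G.Walk v w) (hW : ∀ x ∈ W.support, x ∈ B) (hv : v ∈ C) : w ∈ C := by
  induction W with
  | nil => exact hv
  | cons hadj W ih =>
    refine ih (fun x hx => hW x (List.mem_cons_of_mem _ hx)) (hB (mem_inter.2 ⟨?_, ?_⟩))
    · exact hW _ (List.mem_cons_of_mem _ W.start_mem_support)
    · exact mem_spo.2 (Or.inr ⟨_, hv, hadj⟩)

lemma isMaxConnComp_iff {B C : Finset V} (hC : C.Nonempty) (hconn : Conn G C) :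
    IsMaxConnComp G B C ↔ C ⊆ B ∧ B ∩ spo G C ⊆ C := by
  constructor
  · rintro ⟨hCB, -, -, hmax⟩
    refine ⟨hCB, fun x hx => ?_⟩
    obtain ⟨hxB, hxspo⟩ := mem_inter.1 hx
    obtain hxC | ⟨v, hv, hadj⟩ := mem_spo.1 hxspo
    · exact hxC
    · rw [← hmax _ (subset_insert x C) (insert_subset hxB hCB) (hconn.insert_of_adj hv hadj)]
      exact mem_insert_self x C
  · rintro ⟨hCB, hB⟩
    refine ⟨hCB, hC, hconn, fun C' hCC' hC'B hconn' => Subset.antisymm (fun y hy => ?_) hCC'⟩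
    obtain ⟨v, hv⟩ := hC
    obtain ⟨W, hW⟩ := hconn' v (hCC' hv) y hy
    exact mem_of_walk_of_inter_spo_subset hB W (fun x hx => hC'B (hW x hx)) hv

lemma sum_filter_mem_maxConnComps {C : Finset V} (hC : C.Nonempty) (hconn : Conn G C)
    (A : Finset V) {W : Finset V} (hCW : C ⊆ W) (q : Finset V → ℝ) :
    ∑ B ∈ univ.filter (fun B : Finset V => (A ⊆ B ∧ B ⊆ W) ∧ C ∈ maxConnComps G B),
        (-1 : ℝ) ^ #(B \ A) * ∏ D ∈ (maxConnComps G B).erase C, q D =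
      (-1 : ℝ) ^ #(C \ A) * pPoly G (A \ C) (W \ spo G C) q := by
  rw [pPoly, mul_sum]
  refine sum_bij' (fun B _ => B \ C) (fun B' _ => B' ∪ C) ?_ ?_ ?_ ?_ ?_ <;>
    simp only [mem_filter, mem_univ, true_and]
  · rintro B ⟨⟨hAB, hBW⟩, hCB⟩
    obtain ⟨-, hBC⟩ := (isMaxConnComp_iff hC hconn).1 (mem_maxConnComps.1 hCB)
    refine ⟨sdiff_subset_sdiff hAB subset_rfl, fun x hx => ?_⟩
    obtain ⟨hxB, hxC⟩ := mem_sdiff.1 hx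
    exact mem_sdiff.2 ⟨hBW hxB, fun hxC' => hxC (hBC (mem_inter.2 ⟨hxB, hxC'⟩))⟩
  · rintro B' ⟨hAB', hB'W⟩
    refine ⟨⟨union_comm C B' ▸ sdiff_le_iff.1 hAB',
      union_subset (hB'W.trans sdiff_subset) hCW⟩, ?_⟩
    refine mem_maxConnComps.2 ((isMaxConnComp_iff hC hconn).2 ⟨subset_union_right, ?_⟩)
    rw [union_inter_distrib_right, disjoint_iff_inter_eq_empty.1 (sdiff_disjoint.mono_left hB'W),
      empty_union]
    exact inter_subset_left
  · rintro B ⟨-, hCB⟩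
    exact sdiff_union_of_subset (mem_maxConnComps.1 hCB).1
  · rintro B' ⟨-, hB'W⟩
    exact union_sdiff_cancel_right ((sdiff_disjoint.mono_left hB'W).mono_right self_subset_spo)
  · rintro B ⟨-, hCB⟩
    have hcard : #(B \ A) = #(C \ A) + #((B \ C) \ (A \ C)) := by
      rw [← card_sdiff_add_card_inter (B \ A) C, add_comm]
      have hCB' := (mem_maxConnComps.1 hCB).1
      congr 2 <;> ext x <;> simp only [mem_sdiff, mem_inter] <;> grind
    rw [erase_maxConnComps hCB, hcard, pow_add, mul_assoc]

lemma hasDerivAt_pPoly_update {C : Finset V} (hC : C.Nonempty) (hconn : Conn G C)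
    (A : Finset V) {W : Finset V} (hCW : C ⊆ W) (q : Finset V → ℝ) (x : ℝ) :
    HasDerivAt (fun t => pPoly G A W (Function.update q C t))
      ((-1 : ℝ) ^ #(C \ A) * pPoly G (A \ C) (W \ spo G C) q) x := by
  rw [← sum_filter_mem_maxConnComps hC hconn A hCW, ← filter_filter, sum_filter]
  refine HasDerivAt.fun_sum fun B _ => ?_
  simpa only [mul_ite, mul_zero] using
    (hasDerivAt_prod_update (maxConnComps G B) q C x).const_mul ((-1 : ℝ) ^ #(B \ A))

end

variable {V : Type*} [Fintype V] [DecidableEq V]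

/-- The likelihood equations: the partial derivative of the log-likelihood
`ℓ(q) = Σ_A n_A log p_A^V(q)` with respect to `q_C`, `C` a nonempty connected set,
is `Σ_{A : spo(C) ∩ (A∖C) = ∅} (−1)^{|C∖A|} (n_A / p_A^V) p_{A∖C}^{V∖spo(C)}`. -/
theorem stmt15 (G : SimpleGraph V) [DecidableRel G.Adj] (n : (V → Bool) → ℕ)
    (C : Finset V) (hC : C.Nonempty) (hconn : Conn G C)
    (q : Finset V → ℝ) (hq : ∀ A : Finset V, 0 < pPoly G A Finset.univ q) :
    HasDerivAt
      (fun s : ℝ => ∑ A : Finset V,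
        (n (fun v => if v ∈ A then false else true) : ℝ) *
          Real.log (pPoly G A Finset.univ (Function.update q C s)))
      (∑ A ∈ Finset.univ.filter (fun A : Finset V => spo G C ∩ (A \ C) = ∅),
        (-1 : ℝ) ^ (C \ A).card *
          ((n (fun v => if v ∈ A then false else true) : ℝ) /
            pPoly G A Finset.univ q) *
          pPoly G (A \ C) (Finset.univ \ spo G C) q)
      (q C) := by
  have hterm (A : Finset V) (c : ℝ) : HasDerivAt
      (fun s => c * Real.log (pPoly G A univ (Function.update q C s)))
      (c * ((-1 : ℝ) ^ #(C \ A) * pPoly G (A \ C) (univ \ spo G C) q / pPoly G A univ q))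
      (q C) := by
    have h := hasDerivAt_pPoly_update hC hconn A (subset_univ C) q (q C)
    simpa only [Function.update_eq_self] using
      (h.log (by simpa only [Function.update_eq_self] using (hq A).ne')).const_mul c
  refine (HasDerivAt.fun_sum fun A _ =>
    hterm A (n (fun v => if v ∈ A then false else true))).congr_deriv ?_
  refine (sum_congr rfl fun A _ => by ring).trans (sum_filter_of_ne fun A _ hA => ?_).symm
  contrapose! hA
  obtain ⟨x, hx⟩ := hA
  obtain ⟨hxspo, hxA⟩ := mem_inter.1 hx
  have hsub : ¬A \ C ⊆ univ \ spo G C := fun h => (mem_sdiff.1 (h hxA)).2 hxspo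
  rw [pPoly_eq_zero_of_not_subset hsub, mul_zero]

end BMMI
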